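/- arXiv:1709.05372 — 2 statements merged into one kernel-verified Lean document; each statement's English description precedes it below -/
import Mathlib

section
/- Let G be a countable group, n ≥ 1 and m ∈ ℕ. For every ξ ∈ ℓ²(G,ℝ)^{⊕n}, the family indexed by pairs (l,g) ∈ {1,…,n}×G with terms D_m(ξ(l)(g)) is multipliable; i.e., the infinite product ∏_{l=1}^n ∏_{g∈G} D_m(ξ(l)(g)) converges unconditionally. -/
/-!
Since `cos x ≥ 1 - x² / 2`, every term of the average `D_m(t)` lies within `2 (π m t)²` of `1`,
so `|D_m(t) - 1| ≤ 2 (π m)² t²`. For `ξ ∈ ℓ²` the values `ξ(l)(g)` are square-summable, hence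
`D_m(ξ(l)(g)) - 1` is absolutely summable, and `∏ (1 + aᵢ)` converges whenever `∑ aᵢ` does.
-/

open scoped ENNReal

noncomputable section

/-- The normalized Dirichlet kernel `D_m(t) = (2m+1)⁻¹ ∑_{j=-m}^{m} cos(2πjt)`. -/
def Dm (m : ℕ) (t : ℝ) : ℝ :=
  (2 * (m : ℝ) + 1)⁻¹ * ∑ j ∈ Finset.Icc (-(m : ℤ)) (m : ℤ), Real.cos (2 * Real.pi * (j : ℝ) * t)

open Real Finset

lemma card_Icc_neg_natCast (m : ℕ) : ((Icc (-(m : ℤ)) m).card : ℝ) = 2 * m + 1 := by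
  rw [Int.card_Icc, show ((m : ℤ) + 1 - -(m : ℤ)).toNat = 2 * m + 1 by omega]
  push_cast; ring

lemma Dm_sub_one (m : ℕ) (t : ℝ) :
    Dm m t - 1 = (2 * (m : ℝ) + 1)⁻¹ * ∑ j ∈ Icc (-(m : ℤ)) m, (cos (2 * π * j * t) - 1) := by
  rw [sum_sub_distrib, sum_const, nsmul_one, card_Icc_neg_natCast, mul_sub,
    inv_mul_cancel₀ (by positivity), Dm]

lemma abs_Dm_sub_one_le (m : ℕ) (t : ℝ) : |Dm m t - 1| ≤ 2 * (π * m) ^ 2 * t ^ 2 := by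
  have hterm : ∀ j ∈ Icc (-(m : ℤ)) m, |cos (2 * π * j * t) - 1| ≤ 2 * (π * m) ^ 2 * t ^ 2 := by
    intro j hj
    have hj2 : (j : ℝ) ^ 2 ≤ (m : ℝ) ^ 2 := by
      rw [mem_Icc] at hj
      exact_mod_cast sq_le_sq' (by omega) hj.2
    rw [abs_sub_comm, abs_of_nonneg (sub_nonneg.2 (cos_le_one _))]
    nlinarith [one_sub_sq_div_two_le_cos (x := 2 * π * j * t), sq_nonneg (π * t)]
  calc |Dm m t - 1|
      ≤ (2 * (m : ℝ) + 1)⁻¹ * ∑ j ∈ Icc (-(m : ℤ)) m, |cos (2 * π * j * t) - 1| := by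
        rw [Dm_sub_one, abs_mul, abs_of_pos (by positivity)]
        gcongr
        exact abs_sum_le_sum_abs _ _
    _ ≤ (2 * (m : ℝ) + 1)⁻¹ * ((Icc (-(m : ℤ)) m).card • (2 * (π * m) ^ 2 * t ^ 2)) := by
        gcongr
        exact sum_le_card_nsmul _ _ _ hterm
    _ = 2 * (π * m) ^ 2 * t ^ 2 := by
        rw [nsmul_eq_mul, card_Icc_neg_natCast, ← mul_assoc, inv_mul_cancel₀ (by positivity),
          one_mul]

lemma multipliable_comp_of_abs_sub_one_le {ι : Type*} {f : ℝ → ℝ} {C : ℝ}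
    (hf : ∀ t, |f t - 1| ≤ C * t ^ 2) {x : ι → ℝ} (hx : Summable fun i => x i ^ 2) :
    Multipliable fun i => f (x i) := by
  have : Summable fun i => f (x i) - 1 :=
    (hx.mul_left C).of_norm_bounded fun i => hf (x i)
  simpa using Real.multipliable_one_add_of_summable this

lemma summable_uncurry_sq_lp_two {ι G : Type*} [Finite ι] (ξ : ι → lp (fun _ : G => ℝ) 2) :
    Summable fun p : ι × G => ξ p.1 p.2 ^ 2 := by
  rw [summable_prod_of_nonneg fun _ => sq_nonneg _]
  refine ⟨fun l => ?_, Summable.of_finite⟩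
  simpa using (lp.memℓp (ξ l)).summable (by norm_num : 0 < (2 : ℝ≥0∞).toReal)

theorem dirichlet_multipliable_general {G : Type*} {n : ℕ}
    (m : ℕ) (ξ : Fin n → lp (fun _ : G => ℝ) 2) :
    Multipliable (fun p : Fin n × G => Dm m (ξ p.1 p.2)) :=
  multipliable_comp_of_abs_sub_one_le (abs_Dm_sub_one_le m) (summable_uncurry_sq_lp_two ξ)

/-- For every `ξ ∈ ℓ²(G,ℝ)^{⊕n}` and `m ∈ ℕ`, the family `(l,g) ↦ D_m(ξ(l)(g))` is
multipliable; i.e. the infinite product `∏_{l=1}^n ∏_{g∈G} D_m(ξ(l)(g))` converges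
unconditionally. -/
theorem dirichlet_multipliable {G : Type*} [Group G] [Countable G] {n : ℕ} (hn : 1 ≤ n)
    (m : ℕ) (ξ : Fin n → lp (fun _ : G => ℝ) 2) :
    Multipliable (fun p : Fin n × G => Dm m (ξ p.1 p.2)) :=
  dirichlet_multipliable_general m ξ
end
end

section
/- Let G be a countable group, n ≥ 1 and m ∈ ℕ. The function Ψ : ℓ²(G,ℝ)^{⊕n} → ℝ defined by Ψ(ξ) = ∏_{l=1}^n ∏_{g∈G} D_m(ξ(l)(g)) (an unconditionally convergent product) is continuous with respect to the ℓ² norm topology. -/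
open scoped ENNReal

noncomputable section

/-!
The kernel satisfies `Dm m 0 = 1`, `|Dm m t| ≤ 1` and `|Dm m s - Dm m t| ≤ 2π²m² |s² - t²|`.
The first and last give `|1 - Dm m t| ≤ 2π²m² t²`, so the product converges for every
square-summable family; since all factors have modulus at most one,
`|∏ aᵢ - ∏ bᵢ| ≤ ∑ |aᵢ - bᵢ|`, and Cauchy–Schwarz bounds this sum by
`2π²m² (‖x‖ + ‖y‖) ‖x - y‖`. Thus the product is locally Lipschitz on `ℓ²`, and
`ℓ²(G, ℝ)^{⊕n}` is isometric to `ℓ²(Fin n × G, ℝ)`.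
-/

open Finset Real Filter Topology
open scoped lp

theorem abs_cos_sub_cos_le_abs_sq_sub_sq (x y : ℝ) : |cos x - cos y| ≤ |x ^ 2 - y ^ 2| / 2 := by
  rw [cos_sub_cos, abs_mul, abs_mul, sq_sub_sq]
  have h₁ : |sin ((x + y) / 2)| ≤ |x + y| / 2 := by
    simpa [abs_div] using abs_sin_le_abs (x := (x + y) / 2)
  have h₂ : |sin ((x - y) / 2)| ≤ |x - y| / 2 := by
    simpa [abs_div] using abs_sin_le_abs (x := (x - y) / 2)
  calc |(-2 : ℝ)| * |sin ((x + y) / 2)| * |sin ((x - y) / 2)|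
      ≤ 2 * (|x + y| / 2) * (|x - y| / 2) := by
        rw [abs_neg, abs_two]; gcongr
    _ = |(x + y) * (x - y)| / 2 := by rw [abs_mul]; ring

theorem natCast_card_Icc_neg_self (m : ℕ) : ((#(Icc (-(m : ℤ)) m) : ℕ) : ℝ) = 2 * m + 1 := by
  rw [Int.card_Icc]
  norm_cast
  omega

theorem abs_inv_mul_sum_Icc_neg_self_le {m : ℕ} {g : ℤ → ℝ} {c : ℝ}
    (hg : ∀ j ∈ Icc (-(m : ℤ)) m, |g j| ≤ c) :
    |(2 * (m : ℝ) + 1)⁻¹ * ∑ j ∈ Icc (-(m : ℤ)) m, g j| ≤ c := by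
  rw [abs_mul, abs_of_pos (by positivity), inv_mul_le_iff₀ (by positivity)]
  calc |∑ j ∈ Icc (-(m : ℤ)) m, g j| ≤ ∑ j ∈ Icc (-(m : ℤ)) m, |g j| := abs_sum_le_sum_abs _ _
    _ ≤ #(Icc (-(m : ℤ)) m) • c := sum_le_card_nsmul _ _ _ hg
    _ = (2 * m + 1) * c := by rw [nsmul_eq_mul, natCast_card_Icc_neg_self]

theorem dm_zero (m : ℕ) : Dm m 0 = 1 := by
  simp only [Dm, mul_zero, cos_zero, sum_const, nsmul_one, natCast_card_Icc_neg_self]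
  exact inv_mul_cancel₀ (by positivity)

theorem abs_dm_le_one (m : ℕ) (t : ℝ) : |Dm m t| ≤ 1 :=
  abs_inv_mul_sum_Icc_neg_self_le fun _ _ => abs_cos_le_one _

theorem abs_dm_sub_dm_le (m : ℕ) (s t : ℝ) :
    |Dm m s - Dm m t| ≤ 2 * π ^ 2 * m ^ 2 * |s ^ 2 - t ^ 2| := by
  rw [Dm, Dm, ← mul_sub, ← sum_sub_distrib]
  refine abs_inv_mul_sum_Icc_neg_self_le fun j hj => ?_
  have hj : (j : ℝ) ^ 2 ≤ (m : ℝ) ^ 2 := by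
    rw [mem_Icc] at hj
    rw [sq_le_sq, Nat.abs_cast]
    exact_mod_cast abs_le.2 hj
  calc |cos (2 * π * j * s) - cos (2 * π * j * t)|
      ≤ |(2 * π * j * s) ^ 2 - (2 * π * j * t) ^ 2| / 2 := abs_cos_sub_cos_le_abs_sq_sub_sq _ _
    _ = 2 * π ^ 2 * j ^ 2 * |s ^ 2 - t ^ 2| := by
        rw [show (2 * π * j * s) ^ 2 - (2 * π * j * t) ^ 2 = 4 * π ^ 2 * j ^ 2 * (s ^ 2 - t ^ 2)
          by ring, abs_mul, abs_of_nonneg (by positivity)]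
        ring
    _ ≤ 2 * π ^ 2 * m ^ 2 * |s ^ 2 - t ^ 2| := by gcongr

section NormedRing

variable {ι R : Type*} [NormedCommRing R] [NormOneClass R]

theorem Finset.norm_prod_sub_prod_le (s : Finset ι) {a b : ι → R} (ha : ∀ i, ‖a i‖ ≤ 1)
    (hb : ∀ i, ‖b i‖ ≤ 1) : ‖∏ i ∈ s, a i - ∏ i ∈ s, b i‖ ≤ ∑ i ∈ s, ‖a i - b i‖ := by
  classical
  induction s using Finset.induction_on with
  | empty => simp
  | insert i s hi ih =>
    have hbs : ‖∏ j ∈ s, b j‖ ≤ 1 :=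
      (Finset.norm_prod_le s b).trans (prod_le_one (fun _ _ => norm_nonneg _) fun j _ => hb j)
    rw [prod_insert hi, prod_insert hi, sum_insert hi]
    calc ‖a i * ∏ j ∈ s, a j - b i * ∏ j ∈ s, b j‖
        = ‖a i * (∏ j ∈ s, a j - ∏ j ∈ s, b j) + (a i - b i) * ∏ j ∈ s, b j‖ := by
          congr 1; ring
      _ ≤ ‖a i‖ * ‖∏ j ∈ s, a j - ∏ j ∈ s, b j‖ + ‖a i - b i‖ * ‖∏ j ∈ s, b j‖ :=
        (norm_add_le _ _).trans (add_le_add (norm_mul_le _ _) (norm_mul_le _ _))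
      _ ≤ 1 * ∑ j ∈ s, ‖a j - b j‖ + ‖a i - b i‖ * 1 := by
        gcongr
        exact ha i
      _ = ‖a i - b i‖ + ∑ j ∈ s, ‖a j - b j‖ := by ring

theorem norm_tprod_sub_tprod_le {a b : ι → R} (ha' : Multipliable a) (hb' : Multipliable b)
    (ha : ∀ i, ‖a i‖ ≤ 1) (hb : ∀ i, ‖b i‖ ≤ 1) (hab : Summable fun i => ‖a i - b i‖) :
    ‖∏' i, a i - ∏' i, b i‖ ≤ ∑' i, ‖a i - b i‖ :=
  le_of_tendsto' (ha'.hasProd.sub hb'.hasProd).norm fun s =>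
    (s.norm_prod_sub_prod_le ha hb).trans (hab.sum_le_tsum s fun _ _ => norm_nonneg _)

end NormedRing

namespace lp

variable {ι : Type*} {E : ι → Type*} [∀ i, NormedAddCommGroup (E i)]

theorem hasSum_norm_sq (x : lp E 2) : HasSum (fun i => ‖x i‖ ^ 2) (‖x‖ ^ 2) := by
  simpa [Real.rpow_two] using hasSum_norm (by norm_num) x

theorem exists_hasSum_norm_mul_norm_le (x y : lp E 2) :
    ∃ C ≤ ‖x‖ * ‖y‖, HasSum (fun i => ‖x i‖ * ‖y i‖) C := by
  have hx := hasSum_norm (p := 2) (by norm_num) x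
  have hy := hasSum_norm (p := 2) (by norm_num) y
  rw [ENNReal.toReal_ofNat] at hx hy
  obtain ⟨C, -, hC, h⟩ := inner_le_Lp_mul_Lq_hasSum_of_nonneg HolderConjugate.two_two
    (norm_nonneg x) (norm_nonneg y) (fun i => norm_nonneg _) (fun i => norm_nonneg _) hx hy
  exact ⟨C, hC, h⟩

end lp

section SquareLipschitz

variable {ι : Type*} {f : ℝ → ℝ} {K : ℝ}

theorem multipliable_comp_lp_of_abs_sub_one_le (hf : ∀ t, |f t - 1| ≤ K * t ^ 2)
    (x : ℓ²(ι, ℝ)) : Multipliable fun i => f (x i) := by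
  have hx : Summable fun i => x i ^ 2 := by simpa using (lp.hasSum_norm_sq x).summable
  have hsub : Summable fun i => f (x i) - 1 := .of_norm_bounded (hx.mul_left K) fun i => hf (x i)
  exact (Real.multipliable_one_add_of_summable hsub).congr fun _ => add_sub_cancel _ _

theorem abs_tprod_comp_sub_tprod_comp_le (hf0 : f 0 = 1) (hf1 : ∀ t, |f t| ≤ 1)
    (hK : ∀ s t, |f s - f t| ≤ K * |s ^ 2 - t ^ 2|) (x y : ℓ²(ι, ℝ)) :
    |∏' i, f (x i) - ∏' i, f (y i)| ≤ K * ((‖x‖ + ‖y‖) * ‖x - y‖) := by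
  have hK0 : 0 ≤ K := by simpa using (abs_nonneg _).trans (hK 1 0)
  have hmult : ∀ z : ℓ²(ι, ℝ), Multipliable fun i => f (z i) :=
    multipliable_comp_lp_of_abs_sub_one_le fun t => by simpa [hf0] using hK t 0
  obtain ⟨A, hA, hxA⟩ := lp.exists_hasSum_norm_mul_norm_le x (x - y)
  obtain ⟨B, hB, hyB⟩ := lp.exists_hasSum_norm_mul_norm_le y (x - y)
  have hsum := (hxA.add hyB).mul_left K
  have hpt : ∀ i, |f (x i) - f (y i)| ≤ K * (‖x i‖ * ‖(x - y) i‖ + ‖y i‖ * ‖(x - y) i‖) := by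
    intro i
    refine (hK _ _).trans (mul_le_mul_of_nonneg_left ?_ hK0)
    rw [lp.coeFn_sub, Pi.sub_apply, sq_sub_sq, abs_mul, ← add_mul]
    exact mul_le_mul_of_nonneg_right (abs_add_le _ _) (abs_nonneg _)
  have hdiff : Summable fun i => |f (x i) - f (y i)| :=
    hsum.summable.of_nonneg_of_le (fun _ => abs_nonneg _) hpt
  calc |∏' i, f (x i) - ∏' i, f (y i)| ≤ ∑' i, |f (x i) - f (y i)| :=
        norm_tprod_sub_tprod_le (hmult x) (hmult y) (fun _ => hf1 _) (fun _ => hf1 _) hdiff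
    _ ≤ K * (A + B) := hasSum_le hpt hdiff.hasSum hsum
    _ ≤ K * ((‖x‖ + ‖y‖) * ‖x - y‖) := by rw [add_mul]; gcongr

theorem continuous_tprod_comp_lp (hf0 : f 0 = 1) (hf1 : ∀ t, |f t| ≤ 1)
    (hK : ∀ s t, |f s - f t| ≤ K * |s ^ 2 - t ^ 2|) :
    Continuous fun x : ℓ²(ι, ℝ) => ∏' i, f (x i) := by
  refine continuous_iff_continuousAt.2 fun x => ?_
  rw [ContinuousAt, tendsto_iff_dist_tendsto_zero]
  have hbound : Tendsto (fun y : ℓ²(ι, ℝ) => K * ((‖y‖ + ‖x‖) * ‖y - x‖)) (𝓝 x) (𝓝 0) := by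
    have hc : Continuous fun y : ℓ²(ι, ℝ) => K * ((‖y‖ + ‖x‖) * ‖y - x‖) := by fun_prop
    simpa using hc.tendsto x
  exact squeeze_zero (fun _ => dist_nonneg)
    (fun y => (Real.dist_eq _ _).trans_le (abs_tprod_comp_sub_tprod_comp_le hf0 hf1 hK y x)) hbound

end SquareLipschitz

theorem continuous_tprod_dm_lp {ι : Type*} (m : ℕ) :
    Continuous fun x : ℓ²(ι, ℝ) => ∏' i, Dm m (x i) :=
  continuous_tprod_comp_lp (dm_zero m) (abs_dm_le_one m) (abs_dm_sub_dm_le m)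

namespace PiLp

variable {ι κ E : Type*} [Fintype ι] [NormedAddCommGroup E]

theorem hasSum_norm_sq_uncurry (ξ : PiLp 2 (fun _ : ι => ℓ²(κ, E))) :
    HasSum (fun p : ι × κ => ‖ξ p.1 p.2‖ ^ 2) (‖ξ‖ ^ 2) := by
  have hslice (l : ι) := lp.hasSum_norm_sq (ξ l)
  have hs : Summable fun p : ι × κ => ‖ξ p.1 p.2‖ ^ 2 :=
    (summable_prod_of_nonneg fun _ => by positivity).2
      ⟨fun l => (hslice l).summable, Summable.of_finite⟩
  convert hs.hasSum using 1
  rw [hs.tsum_prod' fun l => (hslice l).summable, tsum_fintype, norm_sq_eq_of_L2]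
  exact sum_congr rfl fun l _ => (hslice l).tsum_eq.symm

variable [NormedSpace ℝ E]

variable (ι κ E) in
def uncurryL2 : PiLp 2 (fun _ : ι => ℓ²(κ, E)) →ₗᵢ[ℝ] ℓ²(ι × κ, E) where
  toFun ξ := ⟨fun p => ξ p.1 p.2,
    memℓp_gen <| by simpa [Real.rpow_two] using (hasSum_norm_sq_uncurry ξ).summable⟩
  map_add' _ _ := rfl
  map_smul' _ _ := rfl
  norm_map' ξ := by
    refine (sq_eq_sq₀ (norm_nonneg _) (norm_nonneg _)).1 ?_
    exact (lp.hasSum_norm_sq _).unique (hasSum_norm_sq_uncurry ξ)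

@[simp]
theorem uncurryL2_apply (ξ : PiLp 2 (fun _ : ι => ℓ²(κ, E))) (p : ι × κ) :
    uncurryL2 ι κ E ξ p = ξ p.1 p.2 :=
  rfl

end PiLp

theorem dirichlet_product_continuous_general {G : Type*} {n : ℕ} (m : ℕ) :
    Continuous (fun ξ : PiLp 2 (fun _ : Fin n => lp (fun _ : G => ℝ) 2) =>
      ∏' p : Fin n × G, Dm m (ξ p.1 p.2)) := by
  simpa [Function.comp_def] using
    (continuous_tprod_dm_lp m).comp (PiLp.uncurryL2 (Fin n) G ℝ).continuous

/-- The function `Ψ : ℓ²(G,ℝ)^{⊕n} → ℝ`, `Ψ(ξ) = ∏_{l=1}^n ∏_{g∈G} D_m(ξ(l)(g))`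
(an unconditionally convergent product), is continuous in the ℓ² norm topology
(here `ℓ²(G,ℝ)^{⊕n}` carries the `PiLp 2` norm). -/
theorem dirichlet_product_continuous {G : Type*} [Group G] [Countable G] {n : ℕ}
    (hn : 1 ≤ n) (m : ℕ) :
    Continuous (fun ξ : PiLp 2 (fun _ : Fin n => lp (fun _ : G => ℝ) 2) =>
      ∏' p : Fin n × G, Dm m (ξ p.1 p.2)) :=
  dirichlet_product_continuous_general m
end
end
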